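/- Let ξ, ν ∈ ℂ with (1 − |ν|²)·conj(ξ) − 2·conj(ν) ≠ 0, and set ξ′ = (2ν·conj(ξ) + 1 − |ν|²)/((1 − |ν|²)·conj(ξ) − 2·conj(ν)). Then u(ξ′) = u(ξ) − 2·⟨u(ξ), u(ν)⟩·u(ν); that is, the direction represented by ξ′ is the mirror reflection of the direction represented by ξ in the plane orthogonal to the unit vector u(ν). -/

import Mathlib

open Complex

noncomputable section

/-- The unit vector of `ℝ³ = ℂ × ℝ` represented, via inverse stereographic
projection from the south pole, by the direction parameter `ζ ∈ ℂ`. -/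
def dirVec (ζ : ℂ) : ℂ × ℝ :=
  (2 * ζ / (1 + Complex.normSq ζ), (1 - Complex.normSq ζ) / (1 + Complex.normSq ζ))

/-- The Euclidean inner product on `ℝ³ = ℂ × ℝ`. -/
def ip3 (v w : ℂ × ℝ) : ℝ := (v.1 * (starRingEnd ℂ) w.1).re + v.2 * w.2

/-!
Write `ξ′ = N / D`. In homogeneous coordinates the inverse stereographic projection reads
`u(N / D) = (2 N D̄, |D|² - |N|²) / (|N|² + |D|²)`, and for the numerator and denominator of `ξ′`
one computes `|N|² + |D|² = (1 + |ξ|²)(1 + |ν|²)²`, while `N D̄` and `|D|² - |N|²` are exactly the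
two components of `(1 + |ξ|²)(1 + |ν|²)² (u(ξ) - 2⟨u(ξ), u(ν)⟩ u(ν))`.
-/

open ComplexConjugate

def reflNum (ν ξ : ℂ) : ℂ := 2 * ν * conj ξ + 1 - (normSq ν : ℂ)

def reflDen (ν ξ : ℂ) : ℂ := (1 - (normSq ν : ℂ)) * conj ξ - 2 * conj ν

theorem one_add_normSq_pos (z : ℂ) : 0 < 1 + normSq z :=
  add_pos_of_pos_of_nonneg one_pos (normSq_nonneg z)

theorem dirVec_div {N D : ℂ} (hD : D ≠ 0) :
    dirVec (N / D) = (2 * (N * conj D) / (normSq N + normSq D : ℝ),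
      (normSq D - normSq N) / (normSq N + normSq D)) := by
  have hD' : normSq D ≠ 0 := (normSq_pos.mpr hD).ne'
  have hsum : normSq N + normSq D ≠ 0 :=
    (add_pos_of_nonneg_of_pos (normSq_nonneg N) (normSq_pos.mpr hD)).ne'
  have hden : 1 + normSq (N / D) = (normSq N + normSq D) / normSq D := by
    rw [normSq_div]
    field_simp
    ring
  ext
  · have hsumC : ((normSq N + normSq D : ℝ) : ℂ) ≠ 0 := by exact_mod_cast hsum
    simp only [dirVec]
    rw [← ofReal_one, ← ofReal_add, hden, ofReal_div, ← mul_conj D]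
    field_simp
  · simp only [dirVec]
    rw [hden, normSq_div]
    field_simp

section

variable (ξ ν : ℂ)

theorem ip3_dirVec :
    ip3 (dirVec ξ) (dirVec ν) = (4 * (ξ * conj ν).re + (1 - normSq ξ) * (1 - normSq ν)) /
      ((1 + normSq ξ) * (1 + normSq ν)) := by
  have hξ := one_add_normSq_pos ξ
  have hν := one_add_normSq_pos ν
  simp only [ip3, dirVec, map_div₀, map_mul, map_ofNat]
  rw [div_mul_div_comm, ← ofReal_one, ← ofReal_add, ← ofReal_add, conj_ofReal, ← ofReal_mul,
    div_ofReal_re, mul_mul_mul_comm, show (2 * 2 : ℂ) = (4 : ℝ) by norm_num, re_ofReal_mul]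
  field_simp

theorem normSq_reflNum_add_normSq_reflDen :
    normSq (reflNum ν ξ) + normSq (reflDen ν ξ) = (1 + normSq ξ) * (1 + normSq ν) ^ 2 := by
  apply ofReal_injective
  simp only [reflNum, reflDen, ofReal_add, ofReal_mul, ofReal_pow, ofReal_one, ← mul_conj,
    map_add, map_sub, map_mul, map_ofNat, map_one, conj_conj]
  ring

theorem normSq_reflDen_sub_normSq_reflNum :
    normSq (reflDen ν ξ) - normSq (reflNum ν ξ) = (1 - normSq ξ) * (1 + normSq ν) ^ 2 -
      2 * (4 * (ξ * conj ν).re + (1 - normSq ξ) * (1 - normSq ν)) * (1 - normSq ν) := by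
  apply ofReal_injective
  simp only [reflNum, reflDen, ofReal_add, ofReal_sub, ofReal_mul, ofReal_pow, ofReal_one,
    ofReal_ofNat, re_eq_add_conj, ← mul_conj, map_add, map_sub, map_mul, map_ofNat, map_one,
    conj_conj]
  ring

theorem reflNum_mul_conj_reflDen :
    reflNum ν ξ * conj (reflDen ν ξ) = ξ * (1 + normSq ν : ℝ) ^ 2 -
      2 * (4 * (ξ * conj ν).re + (1 - normSq ξ) * (1 - normSq ν) : ℝ) * ν := by
  simp only [reflNum, reflDen, ofReal_add, ofReal_sub, ofReal_mul, ofReal_one, ofReal_ofNat,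
    re_eq_add_conj, ← mul_conj, map_sub, map_mul, map_ofNat, map_one, conj_conj]
  ring

end

/-- The Möbius-type map `ξ ↦ (2ν·ξ̄ + 1 − |ν|²)/((1 − |ν|²)·ξ̄ − 2ν̄)` realises, on
direction parameters, the mirror reflection of directions in the plane orthogonal
to the unit vector represented by `ν`. -/
theorem dirVec_reflection (ξ ν : ℂ)
    (h : (1 - (Complex.normSq ν : ℂ)) * (starRingEnd ℂ) ξ - 2 * (starRingEnd ℂ) ν ≠ 0) :
    dirVec ((2 * ν * (starRingEnd ℂ) ξ + 1 - (Complex.normSq ν : ℂ)) /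
        ((1 - (Complex.normSq ν : ℂ)) * (starRingEnd ℂ) ξ - 2 * (starRingEnd ℂ) ν)) =
      dirVec ξ - (2 * ip3 (dirVec ξ) (dirVec ν)) • dirVec ν := by
  change dirVec (reflNum ν ξ / reflDen ν ξ) = _
  rw [dirVec_div (show reflDen ν ξ ≠ 0 from h), normSq_reflNum_add_normSq_reflDen,
    reflNum_mul_conj_reflDen, normSq_reflDen_sub_normSq_reflNum, ip3_dirVec]
  have hξ := one_add_normSq_pos ξ
  have hν := one_add_normSq_pos ν
  ext
  · have hξC : (1 + normSq ξ : ℂ) ≠ 0 := by exact_mod_cast hξ.ne'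
    have hνC : (1 + normSq ν : ℂ) ≠ 0 := by exact_mod_cast hν.ne'
    simp only [dirVec, Prod.fst_sub, Prod.smul_fst, real_smul]
    push_cast
    field_simp
  · simp only [dirVec, Prod.snd_sub, Prod.smul_snd, smul_eq_mul]
    field_simp

end
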